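/- Let T ∈ ℙ_hom have limit height α < ω₁, and let 𝒞 be a countable set of branches of T. Then there exists T̄ ∈ ℙ_hom with T̄ ≤ T (T̄ end-extends T) such that for every C ∈ 𝒞, the union ⋃C belongs to the α-th level of T̄. -/

import Mathlib

noncomputable section

/-- `ω₁` as an ordinal. -/
def omega1 : Ordinal := (Cardinal.aleph 1).ord

/-- A partial node: a partial function from ordinals into `2 = Fin 2`.
Elements of `2^{<ω₁}` are those whose domain is a (countable) ordinal. -/
abbrev PNode := Ordinal → Option (Fin 2)

/-- `u` is a function with domain `β`, i.e. `u ∈ 2^β`. -/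
def IsNode (u : PNode) (β : Ordinal) : Prop := ∀ γ, (u γ).isSome ↔ γ < β

/-- The extension (inclusion) order on partial functions. -/
def extn (u v : PNode) : Prop := ∀ γ x, u γ = some x → v γ = some x

/-- The translation map `F_{s,t}` for `s, t` of domain `α`:
`F_{s,t}(u)(γ) = u(γ) + t(γ) + s(γ) (mod 2)` for `γ < α`, and `u(γ)` otherwise. -/
def Fmap (α : Ordinal) (s t : PNode) (u : PNode) : PNode :=
  fun γ => (u γ).map (fun x => if γ < α then x + (t γ).getD 0 + (s γ).getD 0 else x)

/-- Restriction of a node below `δ`. -/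
def nrestrict (u : PNode) (δ : Ordinal) : PNode := fun γ => if γ < δ then u γ else none

/-- A subtree of `⟨2^{<ω₁}, ⊆⟩`: a set of functions with countable ordinal domains,
closed under restriction. -/
def Subtree (T : Set PNode) : Prop :=
  (∀ u ∈ T, ∃ β < omega1, IsNode u β) ∧ ∀ u ∈ T, ∀ δ, nrestrict u δ ∈ T

/-- The `α`-th level of `T`. -/
def tlevel (T : Set PNode) (α : Ordinal) : Set PNode := {u ∈ T | IsNode u α}

/-- The height of `T`: the least `α` with `T_α = ∅`. -/
def theight (T : Set PNode) : Ordinal := sInf {α | tlevel T α = ∅}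

/-- `T↾α`: the restriction of `T` below level `α`. -/
def treeRestrict (T : Set PNode) (α : Ordinal) : Set PNode := {u ∈ T | ∃ β < α, IsNode u β}

/-- Normality of a subtree of `2^{<ω₁}`: every non-top node has at least two immediate
successors; at limit levels, nodes are determined by their sets of predecessors
(unique limits); and every node has extensions at all higher levels below the height. -/
def NormalTree (T : Set PNode) : Prop :=
  (∀ u ∈ T, ∀ β, IsNode u β → β + 1 < theight T →
    ∃ v ∈ tlevel T (β + 1), ∃ w ∈ tlevel T (β + 1), v ≠ w ∧ extn u v ∧ extn u w) ∧
  (∀ α : Ordinal, Order.IsSuccLimit α → ∀ v ∈ tlevel T α, ∀ w ∈ tlevel T α,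
    {u ∈ T | extn u v ∧ u ≠ v} = {u ∈ T | extn u w ∧ u ≠ w} → v = w) ∧
  (∀ u ∈ T, ∀ β, IsNode u β → ∀ α, β ≤ α → α < theight T → ∃ v ∈ tlevel T α, extn u v)

/-- Homogeneity: for any `s, t` in the same level, `F_{s,t}` restricts to an
order isomorphism of `T` onto `T`. -/
def Homog (T : Set PNode) : Prop :=
  ∀ α : Ordinal, ∀ s ∈ tlevel T α, ∀ t ∈ tlevel T α,
    Set.BijOn (Fmap α s t) T T ∧
    ∀ u ∈ T, ∀ v ∈ T, (extn u v ↔ extn (Fmap α s t u) (Fmap α s t v))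

/-- The end-extension order on trees: `T ≤ T'` iff `ht T' ≤ ht T` and `T' = T↾ht(T')`. -/
def Tle (T T' : Set PNode) : Prop := theight T' ≤ theight T ∧ T' = treeRestrict T (theight T')

/-- The strict end-extension order on trees: `T < T'` iff `ht T' < ht T` and `T' = T↾ht(T')`. -/
def Tlt (T T' : Set PNode) : Prop := theight T' < theight T ∧ T' = treeRestrict T (theight T')

/-- The poset `ℙ_hom` of countable homogeneous normal subtrees of `2^{<ω₁}`. -/
def Phom : Set (Set PNode) := {T | T.Countable ∧ Subtree T ∧ NormalTree T ∧ Homog T}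

open Classical in
/-- The union `⋃ B` of a family of partial functions (as graphs). -/
def unionNode (B : Set PNode) : PNode :=
  fun γ => if h : ∃ x : Fin 2, ∃ u ∈ B, u γ = some x then some h.choose else none

/-- A branch of `T`: a chain meeting every nonempty level. -/
def TBranch (T B : Set PNode) : Prop :=
  B ⊆ T ∧ IsChain extn B ∧ ∀ α : Ordinal, (tlevel T α).Nonempty → (B ∩ tlevel T α).Nonempty

/-- A branch of `T↾α`: a chain in `T↾α` meeting every level below `α`. -/
def BranchBelow (T : Set PNode) (α : Ordinal) (C : Set PNode) : Prop :=
  C ⊆ treeRestrict T α ∧ IsChain extn C ∧ ∀ β < α, (C ∩ tlevel T β).Nonempty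

/-- The root: the empty function. -/
def emptyNode : PNode := fun _ => none

/-- A condition of `ℙ(T, I, ω₁)`: a function `p : I → T` with countable support. -/
def Cond (T : Set PNode) {ι : Type*} (p : ι → PNode) : Prop :=
  (∀ i, p i ∈ T) ∧ {i | p i ≠ emptyNode}.Countable

/-- The order on `ℙ(T, I, ω₁)`: `p ≤ q` iff `q(i) ≤_T p(i)` for all `i`. -/
def ple {ι : Type*} (p q : ι → PNode) : Prop := ∀ i, extn (q i) (p i)

/-! Fix `b₀ = ⋃C₀` for one `C₀ ∈ 𝒞` and take as new top level the translates of `b₀` by the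
additive monoid `H ⊆ 2^α` generated by the sums `s + t` of two nodes of a common level of `T`
and the sums `⋃C + b₀`, `C ∈ 𝒞`. It is countable, and each generator maps `T` onto itself by
homogeneity of `T` (applied below the level of the node being translated), hence so does all of
`H`. The sum of two top-level nodes lies in `H` again, which makes `T ∪ (b₀ + H)` homogeneous,
and translating `b₀` by `s + b₀↾β` produces a top-level node above any `s ∈ T_β`, which gives
normality. -/

lemma fin2_add_self : ∀ x : Fin 2, x + x = 0 := by decide

lemma AddSubmonoid.countable_closure {M : Type*} [AddMonoid M] {s : Set M} (hs : s.Countable) :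
    (AddSubmonoid.closure s : Set M).Countable := by
  have := hs.to_subtype
  have : Countable (FreeAddMonoid s) := inferInstanceAs (Countable (List s))
  rw [AddSubmonoid.closure_eq_mrange, AddMonoidHom.coe_mrange]
  exact Set.countable_range _

namespace IsNode

variable {u v : PNode} {β γ δ : Ordinal}

lemma apply_eq_none_iff (h : IsNode u β) : u δ = none ↔ β ≤ δ := by
  rw [← Option.not_isSome_iff_eq_none, h δ, not_lt]

lemma exists_apply_eq_some (h : IsNode u β) (hδ : δ < β) : ∃ x, u δ = some x :=
  Option.isSome_iff_exists.1 ((h δ).2 hδ)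

lemma lt_of_apply_eq_some {x : Fin 2} (h : IsNode u β) (hx : u δ = some x) : δ < β :=
  (h δ).1 (by simp [hx])

lemma unique (hβ : IsNode u β) (hγ : IsNode u γ) : β = γ := by
  by_contra hne
  rcases lt_or_gt_of_ne hne with hlt | hlt
  · exact absurd ((hγ β).2 hlt) (by simp [hβ β])
  · exact absurd ((hβ γ).2 hlt) (by simp [hγ γ])

lemma nrestrict (h : IsNode u β) (hδ : δ ≤ β) : IsNode (_root_.nrestrict u δ) δ := by
  intro γ
  by_cases hγ : γ < δ
  · simp [_root_.nrestrict, hγ, h γ, hγ.trans_le hδ]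
  · simp [_root_.nrestrict, hγ]

lemma nrestrict_eq_self (h : IsNode u β) (hδ : β ≤ δ) : _root_.nrestrict u δ = u := by
  funext γ
  by_cases hγ : γ < δ
  · simp [_root_.nrestrict, hγ]
  · simp [_root_.nrestrict, hγ, (h.apply_eq_none_iff).2 (hδ.trans (not_lt.1 hγ))]

lemma le_of_extn (hu : IsNode u β) (hv : IsNode v γ) (h : extn u v) : β ≤ γ := by
  by_contra! hlt
  obtain ⟨x, hx⟩ := hu.exists_apply_eq_some hlt
  exact lt_irrefl γ (hv.lt_of_apply_eq_some (h γ x hx))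

lemma eq_of_extn (hu : IsNode u β) (hv : IsNode v β) (h : extn u v) : u = v := by
  funext δ
  by_cases hδ : δ < β
  · obtain ⟨x, hx⟩ := hu.exists_apply_eq_some hδ
    rw [hx, h δ x hx]
  · rw [hu.apply_eq_none_iff.2 (not_lt.1 hδ), hv.apply_eq_none_iff.2 (not_lt.1 hδ)]

end IsNode

lemma extn_refl (u : PNode) : extn u u := fun _ _ h => h

lemma extn_nrestrict (u : PNode) (δ : Ordinal) : extn (nrestrict u δ) u := by
  intro γ x h
  unfold nrestrict at h
  split at h
  · exact h
  · simp at h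

lemma IsChain.unionNode_eq {C : Set PNode} (hC : IsChain extn C) {c : PNode} (hc : c ∈ C)
    {β γ : Ordinal} (hcβ : IsNode c β) (hγ : γ < β) : unionNode C γ = c γ := by
  obtain ⟨x, hx⟩ := hcβ.exists_apply_eq_some hγ
  have hex : ∃ y : Fin 2, ∃ u ∈ C, u γ = some y := ⟨x, c, hc, hx⟩
  obtain ⟨u, hu, huγ⟩ := hex.choose_spec
  rw [unionNode, dif_pos hex, hx]
  rcases eq_or_ne u c with rfl | hne
  · rw [← huγ, hx]
  · rcases hC hu hc hne with h | h
    · rw [← hx, h γ _ huγ]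
    · rw [← huγ, h γ x hx]

def nodeVal (u : PNode) : Ordinal → Fin 2 := fun δ => (u δ).getD 0

def translateNode (d : Ordinal → Fin 2) (u : PNode) : PNode := fun δ => (u δ).map (· + d δ)

section translateNode

variable {d e : Ordinal → Fin 2} {u v s t : PNode} {β γ δ : Ordinal}

lemma translateNode_translateNode (d e : Ordinal → Fin 2) (u : PNode) :
    translateNode d (translateNode e u) = translateNode (e + d) u := by
  funext δ
  cases u δ <;> simp [translateNode]

@[simp] lemma translateNode_zero (u : PNode) : translateNode 0 u = u := by
  funext δ
  simp [translateNode]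

lemma translateNode_translateNode_self (d : Ordinal → Fin 2) (u : PNode) :
    translateNode d (translateNode d u) = u := by
  funext δ
  cases h : u δ <;> simp [translateNode, h, add_assoc, fin2_add_self]

lemma IsNode.translateNode (h : IsNode u β) (d : Ordinal → Fin 2) :
    IsNode (translateNode d u) β := by
  intro γ
  simp [_root_.translateNode, h γ]

lemma extn_translateNode_iff : extn (translateNode d u) (translateNode d v) ↔ extn u v := by
  have key : ∀ {d : Ordinal → Fin 2} {u v : PNode}, extn u v →
      extn (translateNode d u) (translateNode d v) := by
    intro d u v h γ x hx
    simp only [translateNode, Option.map_eq_some_iff] at hx ⊢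
    obtain ⟨a, ha, rfl⟩ := hx
    exact ⟨a, h γ a ha, rfl⟩
  refine ⟨fun h => ?_, key⟩
  simpa only [translateNode_translateNode_self] using key (d := d) h

lemma translateNode_congr (h : ∀ δ, (u δ).isSome → d δ = e δ) :
    translateNode d u = translateNode e u := by
  funext δ
  cases hu : u δ with
  | none => simp [translateNode, hu]
  | some a => simp [translateNode, hu, h δ (by simp [hu])]

lemma nrestrict_translateNode (d : Ordinal → Fin 2) (u : PNode) (δ : Ordinal) :
    nrestrict (translateNode d u) δ = translateNode d (nrestrict u δ) := by
  funext γ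
  simp only [nrestrict, translateNode]
  split <;> simp

lemma nodeVal_nrestrict_of_lt (hδ : δ < β) : nodeVal (nrestrict u β) δ = nodeVal u δ := by
  simp [nodeVal, nrestrict, hδ]

lemma Fmap_eq_translateNode (hs : IsNode s γ) (ht : IsNode t γ) :
    Fmap γ s t = translateNode (nodeVal s + nodeVal t) := by
  funext u δ
  by_cases hδ : δ < γ
  · obtain ⟨a, ha⟩ := hs.exists_apply_eq_some hδ
    obtain ⟨b, hb⟩ := ht.exists_apply_eq_some hδ
    cases u δ <;> simp [Fmap, translateNode, nodeVal, hδ, ha, hb, add_assoc, add_comm a]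
  · simp [Fmap, translateNode, nodeVal, hδ, hs.apply_eq_none_iff.2 (not_lt.1 hδ),
      ht.apply_eq_none_iff.2 (not_lt.1 hδ)]

lemma translateNode_nodeVal_add (hs : IsNode s γ) (ht : IsNode t γ) :
    translateNode (nodeVal s + nodeVal t) t = s := by
  funext δ
  by_cases hδ : δ < γ
  · obtain ⟨a, ha⟩ := hs.exists_apply_eq_some hδ
    obtain ⟨b, hb⟩ := ht.exists_apply_eq_some hδ
    simp [translateNode, nodeVal, ha, hb, add_comm a, ← add_assoc, fin2_add_self]
  · simp [translateNode, hs.apply_eq_none_iff.2 (not_lt.1 hδ), ht.apply_eq_none_iff.2 (not_lt.1 hδ)]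

lemma nodeVal_translateNode (hu : IsNode u γ) (hd : ∀ δ, γ ≤ δ → d δ = 0) :
    nodeVal (translateNode d u) = nodeVal u + d := by
  funext δ
  by_cases hδ : δ < γ
  · obtain ⟨a, ha⟩ := hu.exists_apply_eq_some hδ
    simp [translateNode, nodeVal, ha]
  · simp [translateNode, nodeVal, hu.apply_eq_none_iff.2 (not_lt.1 hδ), hd δ (not_lt.1 hδ)]

end translateNode

section height

variable {T : Set PNode} {β γ : Ordinal}

lemma theight_le_of_tlevel_eq_empty (h : tlevel T γ = ∅) : theight T ≤ γ :=
  csInf_le' h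

lemma tlevel_nonempty_of_lt_theight (h : γ < theight T) : (tlevel T γ).Nonempty :=
  Set.nonempty_iff_ne_empty.2 fun hγ =>
    notMem_of_lt_csInf (s := {γ | tlevel T γ = ∅}) h (OrderBot.bddBelow _) hγ

lemma tlevel_theight_eq_empty (h : theight T ≠ 0) : tlevel T (theight T) = ∅ := by
  have hne : {γ | tlevel T γ = ∅}.Nonempty := by
    by_contra hempty
    exact h (by rw [theight, Set.not_nonempty_iff_eq_empty.1 hempty, Ordinal.sInf_empty])
  exact csInf_mem hne

lemma theight_eq_of_tlevel (hβ : tlevel T β = ∅) (hlt : ∀ γ < β, (tlevel T γ).Nonempty) :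
    theight T = β :=
  le_antisymm (theight_le_of_tlevel_eq_empty hβ) (le_csInf ⟨β, hβ⟩ fun γ hγ =>
    not_lt.1 fun hγβ => (hlt γ hγβ).ne_empty hγ)

lemma Subtree.exists_isNode_lt_theight (hT : Subtree T) (h : theight T ≠ 0) {u : PNode}
    (hu : u ∈ T) : ∃ β < theight T, IsNode u β := by
  obtain ⟨β, -, huβ⟩ := hT.1 u hu
  refine ⟨β, not_le.1 fun hle => ?_, huβ⟩
  have hmem : nrestrict u (theight T) ∈ tlevel T (theight T) := ⟨hT.2 u hu _, huβ.nrestrict hle⟩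
  rw [tlevel_theight_eq_empty h] at hmem
  exact hmem

end height

section branch

variable {T C : Set PNode} {δ : Ordinal}

lemma TBranch.nrestrict_unionNode_mem (hC : TBranch T C) (hδ : δ < theight T) :
    nrestrict (unionNode C) δ ∈ tlevel T δ := by
  obtain ⟨c, hcC, hc⟩ := hC.2.2 δ (tlevel_nonempty_of_lt_theight hδ)
  suffices nrestrict (unionNode C) δ = c by rwa [this]
  funext γ
  by_cases hγ : γ < δ
  · simp only [nrestrict, if_pos hγ]
    exact hC.2.1.unionNode_eq hcC hc.2 hγ
  · simp [nrestrict, hγ, hc.2.apply_eq_none_iff.2 (not_lt.1 hγ)]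

lemma TBranch.isNode_unionNode (hT : Subtree T) (hlim : Order.IsSuccLimit (theight T))
    (hC : TBranch T C) : IsNode (unionNode C) (theight T) := by
  intro γ
  constructor
  · intro hsome
    by_cases hex : ∃ x : Fin 2, ∃ u ∈ C, u γ = some x
    · obtain ⟨x, u, hu, hux⟩ := hex
      obtain ⟨β, hβ, huβ⟩ := hT.exists_isNode_lt_theight hlim.ne_bot (hC.1 hu)
      exact (huβ.lt_of_apply_eq_some hux).trans hβ
    · simp [unionNode, hex] at hsome
  · intro hγ
    have h := (hC.nrestrict_unionNode_mem (hlim.add_one_lt hγ)).2 γ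
    simpa [nrestrict, lt_add_one γ] using h

end branch

lemma Homog.translateNode_mem {T : Set PNode} (hT : Homog T) {γ : Ordinal} {s t u : PNode}
    (hs : s ∈ tlevel T γ) (ht : t ∈ tlevel T γ) (hu : u ∈ T) :
    translateNode (nodeVal s + nodeVal t) u ∈ T := by
  rw [← Fmap_eq_translateNode hs.2 ht.2]
  exact (hT γ s hs t ht).1.mapsTo hu

def treeTranslations (T : Set PNode) (α : Ordinal) : AddSubmonoid (Ordinal → Fin 2) where
  carrier := {d | (∀ δ, α ≤ δ → d δ = 0) ∧ Set.MapsTo (translateNode d) T T}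
  zero_mem' := ⟨fun _ _ => rfl, fun u hu => by rwa [translateNode_zero]⟩
  add_mem' := by
    rintro d e ⟨hd0, hdT⟩ ⟨he0, heT⟩
    refine ⟨fun δ hδ => by simp [hd0 δ hδ, he0 δ hδ], fun u hu => ?_⟩
    rw [← translateNode_translateNode]
    exact heT (hdT hu)

lemma nodeVal_add_mem_treeTranslations {T : Set PNode} (hT : Homog T) {α γ : Ordinal}
    (hTα : ∀ u ∈ T, ∃ β < α, IsNode u β) {s t : PNode} (hγ : γ ≤ α)
    (hs : IsNode s γ) (ht : IsNode t γ)
    (hsT : ∀ β < α, nrestrict s β ∈ T) (htT : ∀ β < α, nrestrict t β ∈ T) :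
    nodeVal s + nodeVal t ∈ treeTranslations T α := by
  refine ⟨fun δ hδ => ?_, fun u hu => ?_⟩
  · simp [nodeVal, hs.apply_eq_none_iff.2 (hγ.trans hδ), ht.apply_eq_none_iff.2 (hγ.trans hδ)]
  obtain ⟨β, hβα, huβ⟩ := hTα u hu
  set β' := min β γ
  have hβ'α : β' < α := (min_le_left β γ).trans_lt hβα
  have hagree : ∀ {w : PNode}, IsNode w γ → ∀ δ < β, nodeVal (nrestrict w β') δ = nodeVal w δ := by
    intro w hw δ hδ
    by_cases hδγ : δ < γ
    · exact nodeVal_nrestrict_of_lt (lt_min hδ hδγ)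
    · simp [nodeVal, nrestrict, hw.apply_eq_none_iff.2 (not_lt.1 hδγ)]
  have hmem := hT.translateNode_mem ⟨hsT β' hβ'α, hs.nrestrict (min_le_right β γ)⟩
    ⟨htT β' hβ'α, ht.nrestrict (min_le_right β γ)⟩ hu
  rwa [translateNode_congr fun δ hδ => ?_]
  have hδβ := (huβ δ).1 hδ
  simp only [Pi.add_apply, hagree hs δ hδβ, hagree ht δ hδβ]

section topLevel

variable {T L : Set PNode} {α : Ordinal}

lemma mem_tlevel_union_iff (hTα : ∀ u ∈ T, ∃ β < α, IsNode u β) (hL : ∀ u ∈ L, IsNode u α)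
    {u : PNode} {γ : Ordinal} :
    u ∈ tlevel (T ∪ L) γ ↔ u ∈ tlevel T γ ∧ γ < α ∨ u ∈ L ∧ γ = α := by
  constructor
  · rintro ⟨hu | hu, huγ⟩
    · obtain ⟨β, hβ, huβ⟩ := hTα u hu
      exact Or.inl ⟨⟨hu, huγ⟩, huγ.unique huβ ▸ hβ⟩
    · exact Or.inr ⟨hu, huγ.unique (hL u hu)⟩
  · rintro (⟨hu, -⟩ | ⟨hu, rfl⟩)
    · exact ⟨Or.inl hu.1, hu.2⟩
    · exact ⟨Or.inr hu, hL u hu⟩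

lemma tlevel_union_add_one_eq_empty (hTα : ∀ u ∈ T, ∃ β < α, IsNode u β)
    (hL : ∀ u ∈ L, IsNode u α) : tlevel (T ∪ L) (α + 1) = ∅ := by
  refine Set.eq_empty_iff_forall_notMem.2 fun u hu => ?_
  rcases (mem_tlevel_union_iff hTα hL).1 hu with ⟨-, h⟩ | ⟨-, h⟩
  · exact (lt_add_one α).not_gt h
  · exact (lt_add_one α).ne' h

lemma theight_union_le (hTα : ∀ u ∈ T, ∃ β < α, IsNode u β) (hL : ∀ u ∈ L, IsNode u α) :
    theight (T ∪ L) ≤ α + 1 :=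
  theight_le_of_tlevel_eq_empty (tlevel_union_add_one_eq_empty hTα hL)

lemma theight_union_eq (hTα : ∀ u ∈ T, ∃ β < α, IsNode u β) (hL : ∀ u ∈ L, IsNode u α)
    (hT : ∀ γ < α, (tlevel T γ).Nonempty) (hLne : L.Nonempty) : theight (T ∪ L) = α + 1 := by
  refine theight_eq_of_tlevel (tlevel_union_add_one_eq_empty hTα hL) fun γ hγ => ?_
  rcases (Order.lt_add_one_iff.1 hγ).lt_or_eq with hlt | rfl
  · obtain ⟨u, hu⟩ := hT γ hlt
    exact ⟨u, Or.inl hu.1, hu.2⟩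
  · obtain ⟨u, hu⟩ := hLne
    exact ⟨u, Or.inr hu, hL u hu⟩

lemma treeRestrict_union_eq (hTα : ∀ u ∈ T, ∃ β < α, IsNode u β) (hL : ∀ u ∈ L, IsNode u α) :
    treeRestrict (T ∪ L) α = T := by
  ext u
  refine ⟨fun ⟨hu, β, hβ, huβ⟩ => hu.resolve_right fun huL => ?_, fun hu => ⟨Or.inl hu, hTα u hu⟩⟩
  exact hβ.ne (huβ.unique (hL u huL))

lemma Subtree.union_top (hT : Subtree T) (hα : α < omega1) (hL : ∀ u ∈ L, IsNode u α)
    (hLT : ∀ u ∈ L, ∀ δ < α, nrestrict u δ ∈ T) : Subtree (T ∪ L) := by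
  refine ⟨fun u hu => ?_, fun u hu δ => ?_⟩
  · rcases hu with hu | hu
    · exact hT.1 u hu
    · exact ⟨α, hα, hL u hu⟩
  · rcases hu with hu | hu
    · exact Or.inl (hT.2 u hu δ)
    · rcases lt_or_ge δ α with hδ | hδ
      · exact Or.inl (hLT u hu δ hδ)
      · rw [(hL u hu).nrestrict_eq_self hδ]
        exact Or.inr hu

lemma NormalTree.union_top (hT : NormalTree T) (hht : theight T = α)
    (hlim : Order.IsSuccLimit α) (hTα : ∀ u ∈ T, ∃ β < α, IsNode u β)
    (hL : ∀ u ∈ L, IsNode u α) (hLT : ∀ u ∈ L, ∀ δ < α, nrestrict u δ ∈ T)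
    (hext : ∀ u ∈ T, ∃ v ∈ L, extn u v) : NormalTree (T ∪ L) := by
  have hlevel := @mem_tlevel_union_iff _ _ _ hTα hL
  have hheight := theight_union_le hTα hL
  have hlevelT : ∀ {u γ}, u ∈ tlevel T γ → u ∈ tlevel (T ∪ L) γ := fun hu => ⟨Or.inl hu.1, hu.2⟩
  refine ⟨fun u hu β huβ hβ => ?_, fun lam hlam v hv w hw hpred => ?_, ?_⟩
  · have hβα : β < α := Order.add_one_le_iff.1 (Order.lt_add_one_iff.1 (hβ.trans_le hheight))
    rcases (hlevel.1 ⟨hu, huβ⟩) with ⟨huT, -⟩ | ⟨-, rfl⟩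
    · obtain ⟨v, hv, w, hw, hvw, huv, huw⟩ :=
        hT.1 u huT.1 β huβ (hht ▸ hlim.add_one_lt hβα)
      exact ⟨v, hlevelT hv, w, hlevelT hw, hvw, huv, huw⟩
    · exact absurd hβα (lt_irrefl β)
  · rcases hlevel.1 hv with ⟨hvT, hlamα⟩ | ⟨hvL, rfl⟩
    · obtain ⟨hwT, -⟩ := (hlevel.1 hw).resolve_right fun h => hlamα.ne h.2
      have hpredT : ∀ z ∈ tlevel T lam,
          {u ∈ T ∪ L | extn u z ∧ u ≠ z} = {u ∈ T | extn u z ∧ u ≠ z} := by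
        intro z hz
        ext u
        refine ⟨fun ⟨hu, huz⟩ => ⟨hu.resolve_right fun huL => ?_, huz⟩,
          fun ⟨hu, huz⟩ => ⟨Or.inl hu, huz⟩⟩
        exact hlamα.not_ge ((hL u huL).le_of_extn hz.2 huz.1)
      rw [hpredT v hvT, hpredT w hwT] at hpred
      exact hT.2.1 lam hlam v hvT w hwT hpred
    · refine hv.2.eq_of_extn hw.2 fun γ x hx => ?_
      have hγ : γ + 1 < lam := hlam.add_one_lt (hv.2.lt_of_apply_eq_some hx)
      have hres : nrestrict v (γ + 1) ∈ {u ∈ T ∪ L | extn u v ∧ u ≠ v} := by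
        refine ⟨Or.inl (hLT v hvL _ hγ), extn_nrestrict v _, fun heq => hγ.ne ?_⟩
        exact (hv.2.nrestrict hγ.le).unique (by rw [heq]; exact hv.2)
      rw [hpred] at hres
      exact hres.2.1 γ x (by simpa [nrestrict, lt_add_one γ] using hx)
  · intro u hu β huβ γ hβγ hγ
    rcases (Order.lt_add_one_iff.1 (hγ.trans_le hheight)).lt_or_eq with hγα | rfl
    · obtain ⟨huT, -⟩ := (hlevel.1 ⟨hu, huβ⟩).resolve_right fun h => (hβγ.trans_lt hγα).ne h.2
      obtain ⟨v, hv, huv⟩ := hT.2.2 u huT.1 β huβ γ hβγ (hht ▸ hγα)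
      exact ⟨v, hlevelT hv, huv⟩
    · rcases hu with huT | huL
      · obtain ⟨v, hvL, huv⟩ := hext u huT
        exact ⟨v, ⟨Or.inr hvL, hL v hvL⟩, huv⟩
      · exact ⟨u, ⟨Or.inr huL, hL u huL⟩, extn_refl u⟩

end topLevel

def translateOrbit (H : AddSubmonoid (Ordinal → Fin 2)) (b : PNode) : Set PNode :=
  (translateNode · b) '' H

section orbit

variable {T : Set PNode} {α : Ordinal} {H : AddSubmonoid (Ordinal → Fin 2)} {b u : PNode}

lemma isNode_of_mem_translateOrbit (hb : IsNode b α) (hu : u ∈ translateOrbit H b) :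
    IsNode u α := by
  obtain ⟨d, -, rfl⟩ := hu
  exact hb.translateNode d

lemma nrestrict_mem_of_mem_translateOrbit (hH : H ≤ treeTranslations T α)
    (hbT : ∀ δ < α, nrestrict b δ ∈ T) (hu : u ∈ translateOrbit H b) {δ : Ordinal} (hδ : δ < α) :
    nrestrict u δ ∈ T := by
  obtain ⟨d, hd, rfl⟩ := hu
  rw [nrestrict_translateNode]
  exact (hH hd).2 (hbT δ hδ)

lemma exists_extn_mem_translateOrbit (hb : IsNode b α) (hbT : ∀ δ < α, nrestrict b δ ∈ T)
    (hdiff : ∀ γ, ∀ s ∈ tlevel T γ, ∀ t ∈ tlevel T γ, nodeVal s + nodeVal t ∈ H) {β : Ordinal}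
    (hu : u ∈ tlevel T β) (hβ : β < α) : ∃ v ∈ translateOrbit H b, extn u v := by
  refine ⟨_, ⟨_, hdiff β u hu _ ⟨hbT β hβ, hb.nrestrict hβ.le⟩, rfl⟩, fun γ x hx => ?_⟩
  have hγ := hu.2.lt_of_apply_eq_some hx
  obtain ⟨y, hy⟩ := hb.exists_apply_eq_some (hγ.trans hβ)
  simp only [translateNode, nodeVal, nrestrict, hγ, hx, hy, Pi.add_apply, Option.getD_some,
    if_true, Option.map_some, ← add_assoc]
  rw [add_right_comm, fin2_add_self, zero_add]

lemma mapsTo_translateNode_union (hH : H ≤ treeTranslations T α) {d : Ordinal → Fin 2}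
    (hd : d ∈ H) :
    Set.MapsTo (translateNode d) (T ∪ translateOrbit H b) (T ∪ translateOrbit H b) := by
  rintro u (hu | ⟨e, he, rfl⟩)
  · exact Or.inl ((hH hd).2 hu)
  · exact Or.inr ⟨e + d, add_mem he hd, (translateNode_translateNode d e b).symm⟩

lemma homog_union_translateOrbit (hTα : ∀ u ∈ T, ∃ β < α, IsNode u β) (hb : IsNode b α)
    (hH : H ≤ treeTranslations T α)
    (hdiff : ∀ γ, ∀ s ∈ tlevel T γ, ∀ t ∈ tlevel T γ, nodeVal s + nodeVal t ∈ H) :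
    Homog (T ∪ translateOrbit H b) := by
  have hlevel := @mem_tlevel_union_iff _ _ _ hTα fun _ => isNode_of_mem_translateOrbit (H := H) hb
  intro γ s hs t ht
  have hst : nodeVal s + nodeVal t ∈ H := by
    rcases hlevel.1 hs with ⟨hsT, hγ⟩ | ⟨⟨g, hg, rfl⟩, rfl⟩
    · exact hdiff γ s hsT t ((hlevel.1 ht).resolve_right fun h => hγ.ne h.2).1
    · obtain ⟨⟨h, hh, rfl⟩, -⟩ := (hlevel.1 ht).resolve_left fun h => h.2.false
      rw [nodeVal_translateNode hb (hH hg).1, nodeVal_translateNode hb (hH hh).1]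
      convert add_mem hg hh using 1
      funext δ
      simp only [Pi.add_apply]
      rw [add_add_add_comm, fin2_add_self, zero_add]
  rw [Fmap_eq_translateNode hs.2 ht.2]
  have hinv : Set.InvOn (translateNode (nodeVal s + nodeVal t))
      (translateNode (nodeVal s + nodeVal t)) (T ∪ translateOrbit H b) (T ∪ translateOrbit H b) :=
    ⟨fun u _ => translateNode_translateNode_self _ u,
      fun u _ => translateNode_translateNode_self _ u⟩
  exact ⟨hinv.bijOn (mapsTo_translateNode_union hH hst) (mapsTo_translateNode_union hH hst),
    fun u _ v _ => extn_translateNode_iff.symm⟩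

end orbit

lemma union_translateOrbit_mem_Phom_and_tle {T : Set PNode} (hT : T ∈ Phom) {α : Ordinal}
    (hlim : Order.IsSuccLimit α) (hα : α < omega1) (hht : theight T = α) {b : PNode}
    (hb : IsNode b α) (hbT : ∀ δ < α, nrestrict b δ ∈ T) {H : AddSubmonoid (Ordinal → Fin 2)}
    (hHc : (H : Set (Ordinal → Fin 2)).Countable) (hH : H ≤ treeTranslations T α)
    (hdiff : ∀ γ, ∀ s ∈ tlevel T γ, ∀ t ∈ tlevel T γ, nodeVal s + nodeVal t ∈ H) :
    T ∪ translateOrbit H b ∈ Phom ∧ Tle (T ∪ translateOrbit H b) T := by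
  obtain ⟨hTc, hTsub, hTnorm, hThom⟩ := hT
  have hTα : ∀ u ∈ T, ∃ β < α, IsNode u β :=
    hht ▸ fun u => hTsub.exists_isNode_lt_theight (hht ▸ hlim.ne_bot)
  have hL : ∀ u ∈ translateOrbit H b, IsNode u α := fun u => isNode_of_mem_translateOrbit hb
  have hLT : ∀ u ∈ translateOrbit H b, ∀ δ < α, nrestrict u δ ∈ T :=
    fun u hu δ => nrestrict_mem_of_mem_translateOrbit hH hbT hu
  have hext : ∀ u ∈ T, ∃ v ∈ translateOrbit H b, extn u v := fun u hu => by
    obtain ⟨β, hβ, huβ⟩ := hTα u hu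
    exact exists_extn_mem_translateOrbit hb hbT hdiff ⟨hu, huβ⟩ hβ
  have hheight : theight (T ∪ translateOrbit H b) = α + 1 :=
    theight_union_eq hTα hL (fun γ hγ => tlevel_nonempty_of_lt_theight (hht ▸ hγ))
      ⟨b, 0, zero_mem H, translateNode_zero b⟩
  refine ⟨⟨hTc.union (hHc.image _), hTsub.union_top hα hL hLT,
    hTnorm.union_top hht hlim hTα hL hLT hext, homog_union_translateOrbit hTα hb hH hdiff⟩, ?_, ?_⟩
  · rw [hht, hheight]
    exact (lt_add_one α).le
  · rw [hht, treeRestrict_union_eq hTα hL]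

theorem exists_Phom_tle_subset_tlevel {T : Set PNode} (hT : T ∈ Phom) {α : Ordinal}
    (hlim : Order.IsSuccLimit α) (hα : α < omega1) (hht : theight T = α) {B : Set PNode}
    (hBc : B.Countable) (hB : ∀ b ∈ B, IsNode b α ∧ ∀ δ < α, nrestrict b δ ∈ T) :
    ∃ S ∈ Phom, Tle S T ∧ B ⊆ tlevel S α := by
  have ⟨hTc, hTsub, _, hThom⟩ := hT
  have hTα : ∀ u ∈ T, ∃ β < α, IsNode u β :=
    hht ▸ fun u => hTsub.exists_isNode_lt_theight (hht ▸ hlim.ne_bot)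
  rcases B.eq_empty_or_nonempty with rfl | ⟨b₀, hb₀B⟩
  · refine ⟨T, hT, ⟨le_rfl, ?_⟩, Set.empty_subset _⟩
    rw [hht]
    exact (Set.sep_eq_self_iff_mem_true.2 hTα).symm
  obtain ⟨hb₀, hb₀T⟩ := hB b₀ hb₀B
  set P : Set (PNode × PNode) := {p | ∃ γ, p.1 ∈ tlevel T γ ∧ p.2 ∈ tlevel T γ} ∪ (·, b₀) '' B
  set H := AddSubmonoid.closure ((fun p : PNode × PNode => nodeVal p.1 + nodeVal p.2) '' P)
  have hPc : P.Countable := by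
    refine Set.Countable.union (Set.Countable.mono ?_ (hTc.prod hTc)) (hBc.image _)
    exact fun _ ⟨_, hs, ht⟩ => Set.mk_mem_prod hs.1 ht.1
  have hH : H ≤ treeTranslations T α := by
    rw [AddSubmonoid.closure_le]
    rintro _ ⟨⟨s, t⟩, ⟨γ, hs, ht⟩ | ⟨b, hb, hbeq⟩, rfl⟩
    · obtain ⟨β, hβ, hsβ⟩ := hTα s hs.1
      exact nodeVal_add_mem_treeTranslations hThom hTα (hs.2.unique hsβ ▸ hβ.le) hs.2 ht.2
        (fun δ _ => hTsub.2 s hs.1 δ) (fun δ _ => hTsub.2 t ht.1 δ)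
    · obtain ⟨rfl, rfl⟩ := Prod.mk.inj hbeq
      show nodeVal b + nodeVal b₀ ∈ _
      exact nodeVal_add_mem_treeTranslations hThom hTα le_rfl (hB b hb).1 hb₀ (hB b hb).2 hb₀T
  have hdiff : ∀ γ, ∀ s ∈ tlevel T γ, ∀ t ∈ tlevel T γ, nodeVal s + nodeVal t ∈ H :=
    fun γ s hs t ht => AddSubmonoid.subset_closure ⟨(s, t), Or.inl ⟨γ, hs, ht⟩, rfl⟩
  obtain ⟨hS, hST⟩ := union_translateOrbit_mem_Phom_and_tle hT hlim hα hht hb₀ hb₀T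
    (AddSubmonoid.countable_closure (hPc.image _)) hH hdiff
  refine ⟨_, hS, hST, fun b hb => ⟨Or.inr ⟨_, ?_, translateNode_nodeVal_add (hB b hb).1 hb₀⟩,
    (hB b hb).1⟩⟩
  exact AddSubmonoid.subset_closure ⟨(b, b₀), Or.inr ⟨b, hb, rfl⟩, rfl⟩

/-- Lemma 3: if `T ∈ ℙ_hom` has limit height `α < ω₁` and `𝒞` is a countable set of
branches of `T`, then there is `T̄ ∈ ℙ_hom` end-extending `T` such that `⋃C` lies in the
`α`-th level of `T̄` for every `C ∈ 𝒞`. -/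
theorem stmt11 (T : Set PNode) (hT : T ∈ Phom) (α : Ordinal) (hlim : Order.IsSuccLimit α)
    (hα : α < omega1) (hht : theight T = α)
    (𝒞 : Set (Set PNode)) (hcount : 𝒞.Countable) (hbr : ∀ C ∈ 𝒞, TBranch T C) :
    ∃ S ∈ Phom, Tle S T ∧ ∀ C ∈ 𝒞, unionNode C ∈ tlevel S α := by
  have hunion : ∀ b ∈ unionNode '' 𝒞, IsNode b α ∧ ∀ δ < α, nrestrict b δ ∈ T := by
    rintro _ ⟨C, hC, rfl⟩
    subst hht
    exact ⟨(hbr C hC).isNode_unionNode hT.2.1 hlim,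
      fun δ hδ => ((hbr C hC).nrestrict_unionNode_mem hδ).1⟩
  obtain ⟨S, hS, hST, hsub⟩ := exists_Phom_tle_subset_tlevel hT hlim hα hht (hcount.image _) hunion
  exact ⟨S, hS, hST, fun C hC => hsub ⟨C, hC, rfl⟩⟩

end
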